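/- Folding preserves the fundamental group: if Γ' is obtained from a labeled graph Γ by identifying two edges e, f with ι(e) = ι(f) and l(e) = l(f) (together with their terminal vertices and inverse edges), then π₁(Γ') = π₁(Γ) as subgroups of the free group F_X. -/

import Mathlib

/-! Framework: Serre graphs with labels in `X ∪ X⁻¹` (encoded as `X × Bool`),
labeled-graph morphisms, paths, `π₁` as a set of elements of the free group,
folded graphs, core graphs, folding/trimming steps, edge subdivision along a
homomorphism (the functor `F_φ`), Whitehead graphs and the category FGR. -/

/-- A graph in the sense of Serre together with an `X`-labeling. -/
structure LGraph (X : Type) : Type 1 where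
  V : Type
  E : Type
  init : E → V
  bar : E → E
  bar_ne : ∀ e, bar e ≠ e
  bar_bar : ∀ e, bar (bar e) = e
  lab : E → X × Bool
  lab_bar : ∀ e, lab (bar e) = ((lab e).1, !(lab e).2)

namespace LGraph

variable {X : Type}

/-- Terminal vertex of an edge. -/
def term (Γ : LGraph X) (e : Γ.E) : Γ.V := Γ.init (Γ.bar e)

/-- The label of an edge as an element of the free group. -/
def labF (Γ : LGraph X) (e : Γ.E) : FreeGroup X :=
  cond (Γ.lab e).2 (FreeGroup.of (Γ.lab e).1) ((FreeGroup.of (Γ.lab e).1)⁻¹)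

/-- `Γ.chain v p`: the list of edges `p` is a path starting at `v`. -/
def chain (Γ : LGraph X) : Γ.V → List Γ.E → Prop
  | _, [] => True
  | v, e :: p => Γ.init e = v ∧ chain Γ (Γ.term e) p

/-- Endpoint of a path starting at `v`. -/
def endOf (Γ : LGraph X) (v : Γ.V) (p : List Γ.E) : Γ.V :=
  p.foldl (fun _ e => Γ.term e) v

/-- Label of a path, as an element of the free group. -/
def pathLabel (Γ : LGraph X) (p : List Γ.E) : FreeGroup X :=
  (p.map Γ.labF).prod

/-- A path is reduced if it never immediately backtracks. -/
def Reduced (Γ : LGraph X) (p : List Γ.E) : Prop :=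
  p.Chain' (fun e f => f ≠ Γ.bar e)

/-- `π₁` of a graph at a base vertex: labels of closed paths at `v`. -/
def pi1 (Γ : LGraph X) (v : Γ.V) : Set (FreeGroup X) :=
  { g | ∃ p, Γ.chain v p ∧ Γ.endOf v p = v ∧ Γ.pathLabel p = g }

/-- A labeled graph is folded if distinct edges with a common initial vertex
have distinct labels. -/
def Folded (Γ : LGraph X) : Prop :=
  ∀ e f : Γ.E, Γ.init e = Γ.init f → Γ.lab e = Γ.lab f → e = f

/-- Connectivity. -/
def Connected (Γ : LGraph X) : Prop :=
  ∀ v w : Γ.V, ∃ p, Γ.chain v p ∧ Γ.endOf v p = w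

/-- An (unpointed) core graph: folded, connected, every edge lies on a
reduced circuit (reduced closed path which is also cyclically reduced). -/
def IsUCore (Γ : LGraph X) : Prop :=
  Γ.Folded ∧ Γ.Connected ∧
    ∀ e : Γ.E, ∃ v p, Γ.chain v p ∧ Γ.endOf v p = v ∧ Γ.Reduced p ∧
      (∀ e₁ eₙ, p.head? = some e₁ → p.getLast? = some eₙ → e₁ ≠ Γ.bar eₙ) ∧ e ∈ p

end LGraph

/-- Formal inverse of a letter in `X ∪ X⁻¹`. -/
def letterInv {X : Type} (a : X × Bool) : X × Bool := (a.1, !a.2)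

namespace LGraph

variable {X : Type}

/-- A 2-path: a pair of consecutive edges `(e, f)` with `f ≠ ē`. -/
def TwoPath (Γ : LGraph X) (e f : Γ.E) : Prop :=
  Γ.init f = Γ.term e ∧ f ≠ Γ.bar e

/-- The Whitehead graph of a labeled graph, as a set of unordered pairs of
letters: the pairs `{l(e), l(f̄)}` over 2-paths `(e, f)`. -/
def W (Γ : LGraph X) : Set (Sym2 (X × Bool)) :=
  { s | ∃ e f, Γ.TwoPath e f ∧ s = Sym2.mk (Γ.lab e) (letterInv (Γ.lab f)) }

end LGraph

/-- The full Whitehead graph on `X`: all non-diagonal unordered pairs. -/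
def FullW (X : Type) : Set (Sym2 (X × Bool)) := { s | ¬ s.IsDiag }

/-- Morphism of labeled graphs. -/
structure LHom {X : Type} (Γ Δ : LGraph X) where
  mapV : Γ.V → Δ.V
  mapE : Γ.E → Δ.E
  map_init : ∀ e, Δ.init (mapE e) = mapV (Γ.init e)
  map_bar : ∀ e, Δ.bar (mapE e) = mapE (Γ.bar e)
  map_lab : ∀ e, Δ.lab (mapE e) = Γ.lab e

/-- Pointed labeled graph. -/
structure PLGraph (X : Type) extends LGraph X where
  base : V

/-- Morphism of pointed labeled graphs. -/
structure PHom {X : Type} (Γ Δ : PLGraph X) extends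
    LHom Γ.toLGraph Δ.toLGraph where
  map_base : mapV Γ.base = Δ.base

namespace PLGraph

variable {X : Type}

/-- `π₁` of a pointed graph at its base point. -/
def pi1S (Γ : PLGraph X) : Set (FreeGroup X) := Γ.toLGraph.pi1 Γ.base

/-- A pointed core graph: folded, connected, and every edge lies on a reduced
closed path through the base point. -/
def IsCore (Γ : PLGraph X) : Prop :=
  Γ.toLGraph.Folded ∧ Γ.toLGraph.Connected ∧
    ∀ e : Γ.E, ∃ p, Γ.toLGraph.chain Γ.base p ∧
      Γ.toLGraph.endOf Γ.base p = Γ.base ∧ Γ.toLGraph.Reduced p ∧ e ∈ p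

end PLGraph

/-- `Δ` is obtained from `Γ` by one folding: identifying two distinct edges
`e₁, e₂` with the same initial vertex and the same label (and their inverses,
and their terminal vertices). -/
structure FoldStep {X : Type} (Γ Δ : LGraph X) where
  f : LHom Γ Δ
  e₁ : Γ.E
  e₂ : Γ.E
  ne : e₁ ≠ e₂
  init_eq : Γ.init e₁ = Γ.init e₂
  lab_eq : Γ.lab e₁ = Γ.lab e₂
  surjV : Function.Surjective f.mapV
  surjE : Function.Surjective f.mapE
  glueE : f.mapE e₁ = f.mapE e₂
  injE : ∀ d d', f.mapE d = f.mapE d' →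
    d = d' ∨ ({d, d'} : Set Γ.E) = {e₁, e₂} ∨
      ({d, d'} : Set Γ.E) = {Γ.bar e₁, Γ.bar e₂}
  injV : ∀ v w, f.mapV v = f.mapV w →
    v = w ∨ ({v, w} : Set Γ.V) = {Γ.term e₁, Γ.term e₂}

/-- `Δ` is obtained from `Γ` by one trimming: deleting a degree-one vertex
`v` together with its edge pair `{e, ē}`; `j` is the inclusion of `Δ` in `Γ`. -/
structure TrimStep {X : Type} (Γ Δ : LGraph X) where
  j : LHom Δ Γ
  v : Γ.V
  e : Γ.E
  init_e : Γ.init e = v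
  deg_one : ∀ d, Γ.init d = v → d = e
  injV : Function.Injective j.mapV
  injE : Function.Injective j.mapE
  rangeV : Set.range j.mapV = {w | w ≠ v}
  rangeE : Set.range j.mapE = {d | d ≠ e ∧ d ≠ Γ.bar e}

/-- Pointed folding step. -/
def PFold {X : Type} (Γ Δ : PLGraph X) : Prop :=
  ∃ F : FoldStep Γ.toLGraph Δ.toLGraph, F.f.mapV Γ.base = Δ.base

/-- Pointed trimming step (the trimmed vertex is not the base point). -/
def PTrim {X : Type} (Γ Δ : PLGraph X) : Prop :=
  ∃ T : TrimStep Γ.toLGraph Δ.toLGraph, T.v ≠ Γ.base ∧ T.j.mapV Δ.base = Γ.base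

/-- One folding or trimming step on pointed graphs. -/
def PStep {X : Type} (Γ Δ : PLGraph X) : Prop := PFold Γ Δ ∨ PTrim Γ Δ

/-- One folding or trimming step on unpointed graphs. -/
def UStep {X : Type} (Γ Δ : LGraph X) : Prop :=
  Nonempty (FoldStep Γ Δ) ∨ Nonempty (TrimStep Γ Δ)

/-- `Δ` is the subdivision of the `Y`-labeled graph `Γ` along
`φ : Y → FreeGroup X`: each edge `e` is replaced by a fresh path spelling the
reduced word of `φ` applied to the label of `e` (the functor `F_φ`). -/
structure Subdiv {Y X : Type} [DecidableEq X] (φ : Y → FreeGroup X)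
    (Γ : LGraph Y) (Δ : LGraph X) where
  vmap : Γ.V → Δ.V
  emap : Γ.E → List Δ.E
  vmap_inj : Function.Injective vmap
  emap_ne : ∀ e, emap e ≠ []
  emap_chain : ∀ e, Δ.chain (vmap (Γ.init e)) (emap e)
  emap_end : ∀ e, Δ.endOf (vmap (Γ.init e)) (emap e) = vmap (Γ.term e)
  emap_bar : ∀ e, emap (Γ.bar e) = ((emap e).reverse).map Δ.bar
  emap_spell : ∀ e, (emap e).map Δ.lab = (FreeGroup.lift φ (Γ.labF e)).toWord
  emap_nodup : ∀ e, (emap e).Nodup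
  emap_nobar : ∀ e d, d ∈ emap e → Δ.bar d ∉ emap e
  emap_disj : ∀ e e', e' ≠ e → e' ≠ Γ.bar e → ∀ d, d ∈ emap e → d ∉ emap e'
  cover_e : ∀ d : Δ.E, ∃ e, d ∈ emap e
  interior : ∀ w : Δ.V, w ∉ Set.range vmap →
    ∃ d₁ d₂ : Δ.E, d₁ ≠ d₂ ∧ Δ.init d₁ = w ∧ Δ.init d₂ = w ∧
      ∀ d, Δ.init d = w → d = d₁ ∨ d = d₂

/-- Whitehead pairs read along a word: `{wᵢ, wᵢ₊₁⁻¹}` over consecutive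
letters. -/
def wordW {X : Type} (l : List (X × Bool)) : Set (Sym2 (X × Bool)) :=
  { s | ∃ l₁ a b l₂, l = l₁ ++ a :: b :: l₂ ∧ s = Sym2.mk a (letterInv b) }

/-- The image of a letter under (the extension of) `φ`. -/
def letterIm {Y X : Type} (φ : Y → FreeGroup X) (a : Y × Bool) : FreeGroup X :=
  cond a.2 (φ a.1) (φ a.1)⁻¹

/-- A morphism in the category FGR of free groups with restrictions, from
`(Y, N)` to `(X, M)`: a non-degenerate homomorphism `F_Y → F_X` (given on the
basis `Y`) satisfying conditions (i)–(iv). -/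
structure FGRHom (Y X : Type) [DecidableEq X] (N : Set (Sym2 (Y × Bool)))
    (M : Set (Sym2 (X × Bool))) where
  φ : Y → FreeGroup X
  nondeg : ∀ y, φ y ≠ 1
  whitehead : ∀ y, wordW (φ y).toWord ⊆ M
  lastLetter : ∀ a b : Y × Bool, Sym2.mk a b ∈ N →
    ∃ ta tb, (letterIm φ a).toWord.getLast? = some ta ∧
      (letterIm φ b).toWord.getLast? = some tb ∧ ta ≠ tb ∧ Sym2.mk ta tb ∈ M

/-- No cancellation in the product of two (reduced) words. -/
def NoCancel {X : Type} [DecidableEq X] (p q : FreeGroup X) : Prop :=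
  (p * q).toWord = p.toWord ++ q.toWord

/-- A word is cyclically reduced: its last letter is not the inverse of its
first letter. -/
def CycRed {X : Type} [DecidableEq X] (w : FreeGroup X) : Prop :=
  ∀ a b, w.toWord.head? = some a → w.toWord.getLast? = some b → b ≠ (a.1, !a.2)

/-! A fold `f : Γ → Δ` maps closed paths to closed paths with the same label, so
`π₁(Γ) ⊆ π₁(Δ)`. Conversely, `f` is onto on edges and the only vertices it
identifies are the terminal vertices of the folded edges `e₁, e₂`, which are
joined in `Γ` by the path `ē₁ e₂` of label `1`. Hence a path in `Δ` lifts edge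
by edge to a path in `Γ` with the same label, after inserting such label-`1`
detours wherever consecutive lifted edges fail to meet. -/

namespace LGraph

variable {X : Type} (Γ : LGraph X)

def Reads (v w : Γ.V) (g : FreeGroup X) : Prop :=
  ∃ p, Γ.chain v p ∧ Γ.endOf v p = w ∧ Γ.pathLabel p = g

theorem endOf_cons (v : Γ.V) (e : Γ.E) (p : List Γ.E) :
    Γ.endOf v (e :: p) = Γ.endOf (Γ.term e) p := rfl

theorem endOf_append (v : Γ.V) (p q : List Γ.E) :
    Γ.endOf v (p ++ q) = Γ.endOf (Γ.endOf v p) q := by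
  simp only [endOf, List.foldl_append]

theorem chain_append (p q : List Γ.E) (v : Γ.V) :
    Γ.chain v (p ++ q) ↔ Γ.chain v p ∧ Γ.chain (Γ.endOf v p) q := by
  induction p generalizing v with
  | nil => simp [chain, endOf]
  | cons e p ih => simp [chain, ih, endOf_cons, and_assoc]

theorem pathLabel_cons (e : Γ.E) (p : List Γ.E) :
    Γ.pathLabel (e :: p) = Γ.labF e * Γ.pathLabel p := by
  simp [pathLabel]

theorem pathLabel_append (p q : List Γ.E) :
    Γ.pathLabel (p ++ q) = Γ.pathLabel p * Γ.pathLabel q := by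
  simp [pathLabel]

theorem labF_bar (e : Γ.E) : Γ.labF (Γ.bar e) = (Γ.labF e)⁻¹ := by
  simp only [labF, lab_bar]
  cases (Γ.lab e).2 <;> simp

theorem term_bar (e : Γ.E) : Γ.term (Γ.bar e) = Γ.init e := by
  simp [term, bar_bar]

variable {Γ}

theorem Reads.refl (v : Γ.V) : Γ.Reads v v 1 := ⟨[], trivial, rfl, rfl⟩

theorem Reads.cons {v w : Γ.V} {e : Γ.E} {g : FreeGroup X} (he : Γ.init e = v)
    (h : Γ.Reads (Γ.term e) w g) : Γ.Reads v w (Γ.labF e * g) := by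
  obtain ⟨p, hp, hend, rfl⟩ := h
  exact ⟨e :: p, ⟨he, hp⟩, hend, Γ.pathLabel_cons e p⟩

theorem Reads.trans {u v w : Γ.V} {g h : FreeGroup X} (hg : Γ.Reads u v g)
    (hh : Γ.Reads v w h) : Γ.Reads u w (g * h) := by
  obtain ⟨p, hp, rfl, rfl⟩ := hg
  obtain ⟨q, hq, rfl, rfl⟩ := hh
  exact ⟨p ++ q, (Γ.chain_append p q u).2 ⟨hp, hq⟩, Γ.endOf_append u p q,
    Γ.pathLabel_append p q⟩

theorem reads_term_term_one {i j : Γ.E} (hinit : Γ.init i = Γ.init j)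
    (hlab : Γ.lab i = Γ.lab j) : Γ.Reads (Γ.term i) (Γ.term j) 1 := by
  have hlabF : Γ.labF i = Γ.labF j := by simp only [labF, hlab]
  have hmeet : Γ.init j = Γ.term (Γ.bar i) := hinit.symm.trans (Γ.term_bar i).symm
  have h := Reads.cons rfl (Reads.cons hmeet (Reads.refl (Γ.term j)))
  rwa [mul_one, Γ.labF_bar, hlabF, inv_mul_cancel] at h

end LGraph

namespace LHom

open LGraph

variable {X : Type} {Γ Δ : LGraph X} (f : LHom Γ Δ)

theorem labF_map (e : Γ.E) : Δ.labF (f.mapE e) = Γ.labF e := by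
  simp only [labF, f.map_lab]

theorem term_map (e : Γ.E) : Δ.term (f.mapE e) = f.mapV (Γ.term e) := by
  rw [term, f.map_bar, f.map_init, term]

theorem reads_map {v w : Γ.V} {g : FreeGroup X} (h : Γ.Reads v w g) :
    Δ.Reads (f.mapV v) (f.mapV w) g := by
  obtain ⟨p, hp, rfl, rfl⟩ := h
  induction p generalizing v with
  | nil => exact Reads.refl _
  | cons e p ih =>
    obtain ⟨rfl, hp⟩ := hp
    rw [pathLabel_cons, ← f.labF_map]
    exact Reads.cons (f.map_init e) (f.term_map e ▸ ih hp)

theorem pi1_subset_pi1_mapV (v : Γ.V) : Γ.pi1 v ⊆ Δ.pi1 (f.mapV v) :=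
  fun _ h => f.reads_map h

theorem reads_lift (hE : Function.Surjective f.mapE)
    (hV : ∀ v v', f.mapV v = f.mapV v' → Γ.Reads v v' 1) {v v' : Γ.V}
    {g : FreeGroup X} (h : Δ.Reads (f.mapV v) (f.mapV v') g) : Γ.Reads v v' g := by
  obtain ⟨q, hq, hend, rfl⟩ := h
  induction q generalizing v with
  | nil => exact hV v v' hend
  | cons d q ih =>
    obtain ⟨hd, hq⟩ := hq
    obtain ⟨e, rfl⟩ := hE d
    rw [f.term_map] at hq
    rw [endOf_cons, f.term_map] at hend
    have hjoin := hV v (Γ.init e) (hd.symm.trans (f.map_init e))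
    have h := hjoin.trans (Reads.cons rfl (ih hq hend))
    rwa [one_mul, ← f.labF_map, ← pathLabel_cons] at h

end LHom

namespace FoldStep

variable {X : Type} {Γ Δ : LGraph X} (F : FoldStep Γ Δ)

theorem reads_of_mapV_eq {v v' : Γ.V} (h : F.f.mapV v = F.f.mapV v') : Γ.Reads v v' 1 := by
  rcases F.injV v v' h with rfl | hpair
  · exact LGraph.Reads.refl v
  have hv : v ∈ ({Γ.term F.e₁, Γ.term F.e₂} : Set Γ.V) := hpair ▸ Or.inl rfl
  have hv' : v' ∈ ({Γ.term F.e₁, Γ.term F.e₂} : Set Γ.V) := hpair ▸ Or.inr rfl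
  rcases hv with rfl | rfl <;> rcases hv' with rfl | rfl
  · exact LGraph.Reads.refl _
  · exact LGraph.reads_term_term_one F.init_eq F.lab_eq
  · exact LGraph.reads_term_term_one F.init_eq.symm F.lab_eq.symm
  · exact LGraph.Reads.refl _

theorem pi1_map (v : Γ.V) : Δ.pi1 (F.f.mapV v) = Γ.pi1 v :=
  Set.Subset.antisymm (fun _ h => F.f.reads_lift F.surjE (fun _ _ => F.reads_of_mapV_eq) h)
    (F.f.pi1_subset_pi1_mapV v)

end FoldStep

/-- Folding preserves the fundamental group: if `Δ` is obtained
from the pointed labeled graph `Γ` by identifying two edges with the same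
initial vertex and the same label, then `π₁(Δ) = π₁(Γ)` inside `F_X`. -/
theorem stmt5 {X : Type} (Γ Δ : PLGraph X)
    (F : FoldStep Γ.toLGraph Δ.toLGraph) (hbase : F.f.mapV Γ.base = Δ.base) :
    Δ.pi1S = Γ.pi1S := by
  rw [PLGraph.pi1S, PLGraph.pi1S, ← hbase, F.pi1_map]
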